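/- Let G = Q8 be the quaternion group of order 8 and let A be a subgroup of Aut(Q8) of order 3. Then Q8 has a unique maximal A-invariant subgroup, namely its center of order 2, and Q8 is not cyclic. -/

import Mathlib

/-
An automorphism `a` of order 3 of `Q8` cannot normalise the cyclic subgroup `⟨x⟩` of order 4 of a
non-central `x`. If it did, it would act on `⟨x⟩` by an automorphism of order dividing 3, hence
trivially since `Aut(ℤ/4)` has order 2; on the other coset `⟨x⟩y` it would act by a translation
`y ↦ c y` with `c³ = 1`, `c ∈ ⟨x⟩`, hence `c = 1`. So `a` would fix the generators `x`, `y`.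
Consequently an `A`-invariant subgroup containing a non-central `x` contains both `x` and
`a x ∉ ⟨x⟩`, and is the whole group because `⟨x⟩` has index 2. The `A`-invariant subgroups are therefore `Q8`
and the subgroups of the centre, and the centre is the unique maximal one.
-/

/-- A subgroup `H` is invariant under a subgroup `A` of the automorphism group. -/
def SubAInvariant {G : Type*} [Group G] (A : Subgroup (MulAut G)) (H : Subgroup G) : Prop :=
  ∀ a ∈ A, H.map a.toMonoidHom = H

/-- `M` is a maximal `A`-invariant subgroup of `G`. -/
def SubMaxAInvariant {G : Type*} [Group G] (A : Subgroup (MulAut G)) (M : Subgroup G) : Prop :=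
  SubAInvariant A M ∧ M ≠ ⊤ ∧ ∀ K : Subgroup G, SubAInvariant A K → M < K → K = ⊤

open Subgroup

section General

variable {G : Type*} [Group G]

theorem Subgroup.eq_top_of_index_eq_two_of_le {H K : Subgroup G} (hH : H.index = 2) (hHK : H ≤ K)
    {y : G} (hyK : y ∈ K) (hyH : y ∉ H) : K = ⊤ := by
  refine eq_top_iff.mpr fun g _ => ?_
  by_cases hg : g ∈ H
  · exact hHK hg
  · have : g * y⁻¹ ∈ H := (mul_mem_iff_of_index_two hH).mpr (by simp [hg, hyH])
    simpa using K.mul_mem (hHK this) hyK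

namespace MulAut

variable {a : MulAut G}

theorem pow_apply_eq_zpow_pow {x : G} {k : ℤ} (h : a x = x ^ k) (n : ℕ) :
    (a ^ n) x = x ^ (k ^ n) := by
  induction n with
  | zero => simp
  | succ n ih => rw [pow_succ, mul_apply, h, map_zpow, ih, ← zpow_mul, pow_succ]

theorem pow_apply_eq_pow_mul {c y : G} (hc : a c = c) (hy : a y = c * y) (n : ℕ) :
    (a ^ n) y = c ^ n * y := by
  induction n with
  | zero => simp
  | succ n ih =>
    rw [pow_succ, mul_apply, hy, map_mul, ih, pow_apply_eq_zpow_pow (k := 1) (by simpa) n]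
    simp [pow_succ', mul_assoc]

theorem apply_eq_self_of_apply_mem_zpowers {x : G} (ha : a ^ 3 = 1) (hx : orderOf x = 4)
    (h : a x ∈ zpowers x) : a x = x := by
  obtain ⟨k, hk⟩ := mem_zpowers_iff.mp h
  have hk3 : x ^ (k ^ 3) = x ^ (1 : ℤ) := by
    rw [← pow_apply_eq_zpow_pow hk.symm 3, ha, zpow_one, one_apply]
  have hk1 : k ≡ 1 [ZMOD (orderOf x : ℤ)] := by
    rw [zpow_eq_zpow_iff_modEq, hx, ← ZMod.intCast_eq_intCast_iff] at hk3
    rw [hx, ← ZMod.intCast_eq_intCast_iff]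
    push_cast at hk3 ⊢
    generalize (k : ZMod 4) = r at hk3 ⊢
    revert r; decide
  rw [← hk, zpow_eq_zpow_iff_modEq.mpr hk1, zpow_one]

theorem apply_eq_self_of_notMem_zpowers {x y : G} (ha : a ^ 3 = 1)
    (hx : Nat.Coprime 3 (orderOf x)) (hidx : (zpowers x).index = 2) (hax : a x = x)
    (hy : y ∉ zpowers x) : a y = y := by
  have hfix : ∀ z ∈ zpowers x, a z = z := by
    rintro _ ⟨k, rfl⟩
    simp [map_zpow, hax]
  have hay : a y ∉ zpowers x := fun h => hy (a.injective (hfix _ h) ▸ h)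
  set c := a y * y⁻¹
  have hc : c ∈ zpowers x := (mul_mem_iff_of_index_two hidx).mpr (by simp [hay, hy])
  have hcy : a y = c * y := by simp [c]
  have hc3 : c ^ 3 = 1 := by
    simpa [ha] using (pow_apply_eq_pow_mul (hfix c hc) hcy 3).symm
  have hc1 : orderOf c = 1 :=
    Nat.eq_one_of_dvd_coprimes hx (orderOf_dvd_of_pow_eq_one hc3) (orderOf_dvd_of_mem_zpowers hc)
  rw [hcy, orderOf_eq_one_iff.mp hc1, one_mul]

theorem eq_one_of_apply_mem_zpowers {x : G} (ha : a ^ 3 = 1) (hx : orderOf x = 4)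
    (hidx : (zpowers x).index = 2) (h : a x ∈ zpowers x) : a = 1 := by
  have hax := apply_eq_self_of_apply_mem_zpowers ha hx h
  obtain ⟨y, hy⟩ : ∃ y, y ∉ zpowers x := by
    by_contra! hall
    simp [(eq_top_iff' _).mpr hall] at hidx
  have hgen : closure {x, y} = ⊤ :=
    eq_top_of_index_eq_two_of_le hidx (zpowers_le.mpr (subset_closure (by simp)))
      (subset_closure (by simp)) hy
  have hay := apply_eq_self_of_notMem_zpowers ha (by rw [hx]; decide) hidx hax hy
  have := MonoidHom.eq_of_eqOn_dense hgen (f := a.toMonoidHom) (g := MonoidHom.id G)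
    (by rintro _ (rfl | rfl) <;> simpa)
  ext g
  exact DFunLike.congr_fun this g

end MulAut

theorem SubAInvariant.apply_mem {A : Subgroup (MulAut G)} {K : Subgroup G}
    (hK : SubAInvariant A K) {a : MulAut G} (ha : a ∈ A) {x : G} (hx : x ∈ K) : a x ∈ K :=
  hK a ha ▸ mem_map_of_mem a.toMonoidHom hx

theorem subAInvariant_of_characteristic (A : Subgroup (MulAut G)) (H : Subgroup G)
    [hH : H.Characteristic] : SubAInvariant A H :=
  fun a _ => characteristic_iff_map_eq.mp hH a

theorem subMaxAInvariant_iff_eq_of_forall_le_or_eq_top {A : Subgroup (MulAut G)} {Z : Subgroup G}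
    (hZ : SubAInvariant A Z) (hZ_ne : Z ≠ ⊤)
    (hle : ∀ K : Subgroup G, SubAInvariant A K → K ≤ Z ∨ K = ⊤) (M : Subgroup G) :
    SubMaxAInvariant A M ↔ M = Z := by
  constructor
  · rintro ⟨hM, hM_ne, hmax⟩
    have hMZ := (hle M hM).resolve_right hM_ne
    by_contra hne
    exact hZ_ne (hmax Z hZ (lt_of_le_of_ne hMZ hne))
  · rintro rfl
    exact ⟨hZ, hZ_ne, fun K hK hlt => (hle K hK).resolve_left (not_le_of_gt hlt)⟩

end General

namespace QuaternionGroup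

theorem card_center_two : Nat.card (center (QuaternionGroup 2)) = 2 := by
  rw [Nat.card_eq_fintype_card]
  decide

theorem center_ne_top_two : center (QuaternionGroup 2) ≠ ⊤ := by
  intro h
  have := card_center_two
  rw [h, card_top, Nat.card_eq_fintype_card, card] at this
  omega

theorem orderOf_eq_four_of_notMem_center {x : QuaternionGroup 2} (hx : x ∉ center _) :
    orderOf x = 4 := by
  have hsq : ∀ x : QuaternionGroup 2, x ∉ center _ → x ^ 2 ≠ 1 := by decide
  exact orderOf_eq_prime_pow (p := 2) (n := 1) (by simpa using hsq x hx)
    (by simpa [exponent] using Monoid.pow_exponent_eq_one x)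

theorem index_zpowers_eq_two_of_notMem_center {x : QuaternionGroup 2} (hx : x ∉ center _) :
    (zpowers x).index = 2 := by
  have := (zpowers x).index_mul_card
  rw [Nat.card_zpowers, orderOf_eq_four_of_notMem_center hx, Nat.card_eq_fintype_card, card] at this
  omega

theorem le_center_or_eq_top_of_subAInvariant {A : Subgroup (MulAut (QuaternionGroup 2))}
    {a : MulAut (QuaternionGroup 2)} (haA : a ∈ A) (ha : orderOf a = 3) {K : Subgroup _}
    (hK : SubAInvariant A K) : K ≤ center _ ∨ K = ⊤ := by
  refine or_iff_not_imp_left.mpr fun hKZ => ?_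
  obtain ⟨x, hxK, hxZ⟩ := SetLike.not_le_iff_exists.mp hKZ
  have hidx := index_zpowers_eq_two_of_notMem_center hxZ
  have hax : a x ∉ zpowers x := fun h => by
    simpa [ha] using congrArg orderOf <| MulAut.eq_one_of_apply_mem_zpowers
      (ha ▸ pow_orderOf_eq_one a) (orderOf_eq_four_of_notMem_center hxZ) hidx h
  exact eq_top_of_index_eq_two_of_le hidx (zpowers_le.mpr hxK) (hK.apply_mem haA hxK) hax

theorem not_isCyclic_two : ¬ IsCyclic (QuaternionGroup 2) := by
  intro h
  have := IsCyclic.exponent_eq_card (α := QuaternionGroup 2)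
  rw [exponent, Nat.card_eq_fintype_card, card] at this
  norm_num at this

end QuaternionGroup

open QuaternionGroup in
theorem stmt4 (A : Subgroup (MulAut (QuaternionGroup 2))) (hA : Nat.card A = 3) :
    (∀ M : Subgroup (QuaternionGroup 2),
        SubMaxAInvariant A M ↔ M = Subgroup.center (QuaternionGroup 2)) ∧
      Nat.card (Subgroup.center (QuaternionGroup 2)) = 2 ∧
      ¬ IsCyclic (QuaternionGroup 2) := by
  obtain ⟨a, ha⟩ := exists_prime_orderOf_dvd_card' 3 hA.symm.dvd
  have hle : ∀ K, SubAInvariant A K → K ≤ center _ ∨ K = ⊤ := fun _ =>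
    le_center_or_eq_top_of_subAInvariant a.2 ((orderOf_coe a).trans ha)
  exact ⟨subMaxAInvariant_iff_eq_of_forall_le_or_eq_top (subAInvariant_of_characteristic A _)
    center_ne_top_two hle, card_center_two, not_isCyclic_two⟩
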